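/- GEORCE update scheme (Proposition 2): The GEORCE system has exactly one solution (u, μ), and it is given explicitly by μ_{T−1} = (Σ_{t=0}^{T−1} G_t⁻¹)⁻¹ (2(a − b) − Σ_{t=0}^{T−1} G_t⁻¹ Σ_{j=t+1}^{T−1} ν_j), μ_t = μ_{T−1} + Σ_{j=t+1}^{T−1} ν_j for t = 0, …, T−1, and u_t = −(1/2) G_t⁻¹ (μ_{T−1} + Σ_{j=t+1}^{T−1} ν_j) for t = 0, …, T−1. -/
import Mathlib

open Matrix

/-- `∑_{j > t} ν_j`. -/
noncomputable def sumNuAfter (d T : ℕ) (ν : Fin T → (Fin d → ℝ)) (t : Fin T) :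
    Fin d → ℝ :=
  ∑ j ∈ Finset.univ.filter (fun j : Fin T => t < j), ν j

/-- The explicit formula for `μ_{T-1}`:
`μ_{T-1} = (∑_t G_t⁻¹)⁻¹ (2(a-b) - ∑_t G_t⁻¹ ∑_{j>t} ν_j)`. -/
noncomputable def muLast (d T : ℕ) (Gm : Fin T → Matrix (Fin d) (Fin d) ℝ)
    (ν : Fin T → (Fin d → ℝ)) (a b : Fin d → ℝ) : Fin d → ℝ :=
  (∑ t, (Gm t)⁻¹)⁻¹.mulVec
    ((2 : ℝ) • (a - b) - ∑ t, (Gm t)⁻¹.mulVec (sumNuAfter d T ν t))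

lemma sumNuAfter_last' {d T : ℕ} (ν : Fin T → (Fin d → ℝ)) (t : Fin T)
    (ht : (t : ℕ) = T - 1) : sumNuAfter d T ν t = 0 := by
  unfold sumNuAfter
  rw [Finset.sum_eq_zero]
  intro j hj
  simp only [Finset.mem_filter, Fin.lt_def] at hj
  omega

lemma sumNuAfter_step' {d T : ℕ} (ν : Fin T → (Fin d → ℝ)) (t s : Fin T)
    (hs : (s : ℕ) = (t : ℕ) + 1) :
    sumNuAfter d T ν t = ν s + sumNuAfter d T ν s := by
  unfold sumNuAfter
  have h1 : Finset.univ.filter (fun j : Fin T => t < j)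
      = insert s (Finset.univ.filter (fun j : Fin T => s < j)) := by
    ext j
    simp only [Finset.mem_filter, Finset.mem_insert, Finset.mem_univ, true_and,
      Fin.lt_def, Fin.ext_iff]
    omega
  rw [h1, Finset.sum_insert (by simp)]

lemma posSemidef_sum' {d : ℕ} {ι : Type*} (s : Finset ι)
    (A : ι → Matrix (Fin d) (Fin d) ℝ)
    (h : ∀ i ∈ s, (A i).PosSemidef) : (∑ i ∈ s, A i).PosSemidef :=
  Finset.sum_induction A _ (fun _ _ ha hb => ha.add hb) Matrix.PosSemidef.zero h

lemma sum_mulVec' {d : ℕ} {ι : Type*} (s : Finset ι)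
    (A : ι → Matrix (Fin d) (Fin d) ℝ) (v : Fin d → ℝ) :
    (∑ i ∈ s, A i).mulVec v = ∑ i ∈ s, (A i).mulVec v := by
  induction s using Finset.cons_induction with
  | empty => simp
  | cons a s ha ih => simp [Matrix.add_mulVec, ih]

lemma posDef_sum_inv {d T : ℕ} (hT : 2 ≤ T)
    (Gm : Fin T → Matrix (Fin d) (Fin d) ℝ) (hGpos : ∀ t, (Gm t).PosDef) :
    (∑ t, (Gm t)⁻¹).PosDef := by
  have hmem : (⟨0, by omega⟩ : Fin T) ∈ (Finset.univ : Finset (Fin T)) :=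
    Finset.mem_univ _
  rw [← Finset.add_sum_erase _ _ hmem]
  exact (hGpos _).inv.add_posSemidef
    (posSemidef_sum' _ _ (fun i _ => (hGpos i).inv.posSemidef))

/-- Downward propagation of μ from the recurrence. -/
lemma mu_prop {d T : ℕ} (hT : 2 ≤ T) (ν μ : Fin T → (Fin d → ℝ))
    (h2 : ∀ t : ℕ, ∀ h : t + 1 < T,
        ν ⟨t + 1, h⟩ + μ ⟨t + 1, h⟩ = μ ⟨t, Nat.lt_of_succ_lt h⟩) :
    ∀ t : Fin T, μ t = μ ⟨T - 1, by omega⟩ + sumNuAfter d T ν t := by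
  have key : ∀ m : ℕ, ∀ t : Fin T, (t : ℕ) + m = T - 1 →
      μ t = μ ⟨T - 1, by omega⟩ + sumNuAfter d T ν t := by
    intro m
    induction m with
    | zero =>
        intro t ht
        have he : t = ⟨T - 1, by omega⟩ := Fin.ext (by simp only [Fin.val_mk]; omega)
        rw [sumNuAfter_last' ν t (by omega), add_zero]
        exact congrArg μ he
    | succ m ih =>
        intro t ht
        have hlt : (t : ℕ) + 1 < T := by omega
        have hs := ih ⟨(t : ℕ) + 1, hlt⟩ (by simp only [Fin.val_mk]; omega)
        have hrec := h2 (t : ℕ) hlt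
        have htt : (⟨(t : ℕ), Nat.lt_of_succ_lt hlt⟩ : Fin T) = t := Fin.ext rfl
        rw [htt] at hrec
        rw [← hrec, hs, sumNuAfter_step' ν t ⟨(t : ℕ) + 1, hlt⟩ rfl]
        abel
  intro t
  exact key (T - 1 - (t : ℕ)) t (by omega)

/-- GEORCE update scheme (Proposition 2): the GEORCE system
`2 G_t u_t + μ_t = 0`, `ν_t + μ_t = μ_{t-1}`, `∑_t u_t = b - a`
has exactly one solution `(u, μ)`, given explicitly by
`μ_t = μ_{T-1} + ∑_{j>t} ν_j` and `u_t = -(1/2) G_t⁻¹ (μ_{T-1} + ∑_{j>t} ν_j)`,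
with `μ_{T-1}` as in `muLast`. -/
theorem georce_update_scheme
    (d T : ℕ) (hd : 1 ≤ d) (hT : 2 ≤ T)
    (Gm : Fin T → Matrix (Fin d) (Fin d) ℝ)
    (hGsym : ∀ t, (Gm t).IsSymm) (hGpos : ∀ t, (Gm t).PosDef)
    (ν : Fin T → (Fin d → ℝ)) (a b : Fin d → ℝ)
    (u μ : Fin T → (Fin d → ℝ)) :
    ((∀ t, (2 : ℝ) • (Gm t).mulVec (u t) + μ t = 0) ∧
      (∀ t : ℕ, ∀ h : t + 1 < T,
        ν ⟨t + 1, h⟩ + μ ⟨t + 1, h⟩ = μ ⟨t, Nat.lt_of_succ_lt h⟩) ∧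
      (∑ t, u t = b - a))
    ↔
    ((∀ t, μ t = muLast d T Gm ν a b + sumNuAfter d T ν t) ∧
      (∀ t, u t = -((1 : ℝ) / 2) •
        (Gm t)⁻¹.mulVec (muLast d T Gm ν a b + sumNuAfter d T ν t))) := by
  -- notation
  set S : Fin T → (Fin d → ℝ) := sumNuAfter d T ν with hS
  set SG : Matrix (Fin d) (Fin d) ℝ := ∑ t, (Gm t)⁻¹ with hSG
  have hSGpos : SG.PosDef := posDef_sum_inv hT Gm hGpos
  have hGdet : ∀ t, IsUnit (Gm t).det := fun t =>
    (Matrix.isUnit_iff_isUnit_det _).mp (hGpos t).isUnit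
  have hSGdet : IsUnit SG.det := (Matrix.isUnit_iff_isUnit_det _).mp hSGpos.isUnit
  have hGinv : ∀ t, (Gm t)⁻¹ * Gm t = 1 := fun t => Matrix.nonsing_inv_mul _ (hGdet t)
  have hGinv' : ∀ t, Gm t * (Gm t)⁻¹ = 1 := fun t => Matrix.mul_nonsing_inv _ (hGdet t)
  have hSGinv' : SG * SG⁻¹ = 1 := Matrix.mul_nonsing_inv _ hSGdet
  -- the common sum computation
  have sum_u : ∀ m : Fin d → ℝ,
      (∑ t, (-((1:ℝ)/2)) • (Gm t)⁻¹.mulVec (m + S t)) =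
        (-((1:ℝ)/2)) • (SG.mulVec m + ∑ t, (Gm t)⁻¹.mulVec (S t)) := by
    intro m
    rw [← Finset.smul_sum]
    congr 1
    rw [hSG, sum_mulVec', ← Finset.sum_add_distrib]
    exact Finset.sum_congr rfl fun t _ => by rw [Matrix.mulVec_add]
  constructor
  · rintro ⟨h1, h2, h3⟩
    -- u t = -(1/2) • G⁻¹ μ t
    have hu : ∀ t, u t = (-((1:ℝ)/2)) • (Gm t)⁻¹.mulVec (μ t) := by
      intro t
      have e1 : (Gm t).mulVec (u t) = (-((1:ℝ)/2)) • μ t := by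
        have := h1 t
        have h2' : (2:ℝ) • (Gm t).mulVec (u t) = -μ t :=
          eq_neg_of_add_eq_zero_left this
        calc (Gm t).mulVec (u t)
            = ((1:ℝ)/2) • ((2:ℝ) • (Gm t).mulVec (u t)) := by
              rw [smul_smul]; norm_num
          _ = ((1:ℝ)/2) • (-μ t) := by rw [h2']
          _ = (-((1:ℝ)/2)) • μ t := by rw [smul_neg, neg_smul]
      calc u t = ((Gm t)⁻¹ * Gm t).mulVec (u t) := by rw [hGinv t, Matrix.one_mulVec]
        _ = (Gm t)⁻¹.mulVec ((Gm t).mulVec (u t)) := by rw [Matrix.mulVec_mulVec]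
        _ = (-((1:ℝ)/2)) • (Gm t)⁻¹.mulVec (μ t) := by
              rw [e1, Matrix.mulVec_smul]
    -- μ t = μ_last + S t
    have hmu := mu_prop hT ν μ h2
    set ml : Fin d → ℝ := μ ⟨T - 1, by omega⟩ with hml
    -- from the sum condition: SG.mulVec ml = 2(a-b) - ∑ G⁻¹ S
    have hsum : SG.mulVec ml + ∑ t, (Gm t)⁻¹.mulVec (S t) = (2:ℝ) • (a - b) := by
      have e : (∑ t, u t) = (-((1:ℝ)/2)) • (SG.mulVec ml + ∑ t, (Gm t)⁻¹.mulVec (S t)) := by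
        rw [← sum_u ml]
        exact Finset.sum_congr rfl fun t _ => by rw [hu t, hmu t]
      have e2 : (-((1:ℝ)/2)) • (SG.mulVec ml + ∑ t, (Gm t)⁻¹.mulVec (S t)) = b - a := by
        rw [← e, h3]
      calc SG.mulVec ml + ∑ t, (Gm t)⁻¹.mulVec (S t)
          = (-2:ℝ) • ((-((1:ℝ)/2)) • (SG.mulVec ml + ∑ t, (Gm t)⁻¹.mulVec (S t))) := by
            rw [smul_smul]; norm_num
        _ = (-2:ℝ) • (b - a) := by rw [e2]
        _ = (2:ℝ) • (a - b) := by rw [neg_smul, ← smul_neg, neg_sub]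
    have hml_eq : ml = muLast d T Gm ν a b := by
      have : SG.mulVec ml = (2:ℝ) • (a - b) - ∑ t, (Gm t)⁻¹.mulVec (S t) := by
        rw [← hsum]; abel
      have hSGinv : SG⁻¹ * SG = 1 := Matrix.nonsing_inv_mul _ hSGdet
      calc ml = (SG⁻¹ * SG).mulVec ml := by rw [hSGinv, Matrix.one_mulVec]
        _ = SG⁻¹.mulVec (SG.mulVec ml) := by rw [Matrix.mulVec_mulVec]
        _ = muLast d T Gm ν a b := by rw [this]; rfl
    refine ⟨fun t => by rw [hmu t, hml_eq], fun t => by rw [hu t, hmu t, hml_eq]⟩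
  · rintro ⟨hmu, hu⟩
    refine ⟨?_, ?_, ?_⟩
    · intro t
      rw [hu t, ← hmu t, Matrix.mulVec_smul, smul_smul]
      have : (2:ℝ) * -((1:ℝ)/2) = -1 := by norm_num
      rw [this, Matrix.mulVec_mulVec, hGinv' t, Matrix.one_mulVec, neg_one_smul,
        neg_add_cancel]
    · intro t h
      rw [hmu ⟨t+1, h⟩, hmu ⟨t, Nat.lt_of_succ_lt h⟩, hS,
        sumNuAfter_step' ν ⟨t, Nat.lt_of_succ_lt h⟩ ⟨t+1, h⟩ rfl]
      abel
    · have e : (∑ t, u t) =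
          (-((1:ℝ)/2)) • (SG.mulVec (muLast d T Gm ν a b) + ∑ t, (Gm t)⁻¹.mulVec (S t)) := by
        rw [← sum_u]
        exact Finset.sum_congr rfl fun t _ => by rw [hu t]
      have e2 : SG.mulVec (muLast d T Gm ν a b)
          = (2:ℝ) • (a - b) - ∑ t, (Gm t)⁻¹.mulVec (S t) := by
        show SG.mulVec (SG⁻¹.mulVec _) = _
        rw [Matrix.mulVec_mulVec, hSGinv', Matrix.one_mulVec]
      rw [e, e2]
      rw [sub_add_cancel, smul_smul]
      norm_num
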